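/- Let n be a positive even integer, e an integer with n < e < 3n/2, and l_1,…,l_n nonnegative integers with Σ_{i=1}^{n} l_i = n(e − n − 1); set Δ = 3n/2 − e, L_i = l_i + Δ, and F = (n/2)(3n/2 + 1). Then the PRN3DM instance (n, e, l_1,…,l_n) is a yes-instance if and only if there exists a feasible schedule for the two-machine unit-time open shop with time lags L_1,…,L_n whose total completion time satisfies Σ_{i=1}^{n} C_i ≤ F. (This is the correctness of the reduction underlying the theorem that O2 | p_{ij}=1, l_i | ΣC_i is NP-hard in the strong sense.) -/

import Mathlib

/-! Write `n = 2h`, so `Δ = 3h - e` and the lags sum to `∑ L = n (h - 1)`. For every feasible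
schedule, each machine uses `n` distinct start times and each job's later operation starts
`L i + 1` after its earlier one, whence `2 ∑ C ≥ n (n - 1) + ∑ L + 3 n = 2 h (3 h + 1)`: the
bound `F` is exactly this lower bound. A schedule attaining it fills the slots `0, …, n - 1` on
both machines with every lag tight. Splitting the jobs by the machine that serves them first, a
convexity argument (`a + b = 2h` and `C(a,2) + C(b,2) ≤ 2 C(h,2)` force `a = h`) shows that each
class has `h` jobs whose first operations fill the slots `0, …, h - 1`. A job with first operation
at `π - 1` and second at `3h - σ` then satisfies `π + l + σ = e`, which reads a matching off the
schedule, and read backwards turns a matching into a schedule attaining the bound. -/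

/-- The PRN3DM instance `(n, e, l)` is a yes-instance: there is a partition of
`{1,…,n}` into `A` and `B` of size `n/2` each, and bijections
`πA : A → {1,…,n/2}`, `σA : A → {n/2+1,…,n}`, `πB : B → {n/2+1,…,n}`,
`σB : B → {1,…,n/2}` with `πA i + l i + σA i = e` on `A` and
`πB i + l i + σB i = e` on `B`. -/
def PRN3DMYes (n e : ℕ) (l : ℕ → ℕ) : Prop :=
  ∃ (A B : Finset ℕ) (πA σA πB σB : ℕ → ℕ),
    Disjoint A B ∧ A ∪ B = Finset.Icc 1 n ∧
    A.card = n / 2 ∧ B.card = n / 2 ∧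
    Set.BijOn πA ↑A ↑(Finset.Icc 1 (n / 2)) ∧
    Set.BijOn σA ↑A ↑(Finset.Icc (n / 2 + 1) n) ∧
    Set.BijOn πB ↑B ↑(Finset.Icc (n / 2 + 1) n) ∧
    Set.BijOn σB ↑B ↑(Finset.Icc 1 (n / 2)) ∧
    (∀ i ∈ A, πA i + l i + σA i = e) ∧
    (∀ i ∈ B, πB i + l i + σB i = e)

/-- A feasible integer schedule for the two-machine unit-time open shop with
time lags `L` on jobs `{1,…,n}`: `s i m` is the start time of the operation of
job `i` on machine `m`; each machine processes at most one operation at a time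
(injectivity of start times on each machine), and the later operation of a job
starts at least `L i + 1` after the earlier one starts (i.e. at least `L i`
after the earlier operation completes). -/
def FeasibleSchedule (n : ℕ) (L : ℕ → ℕ) (s : ℕ → Fin 2 → ℕ) : Prop :=
  (∀ m : Fin 2, Set.InjOn (fun i => s i m) ↑(Finset.Icc 1 n)) ∧
  (∀ i ∈ Finset.Icc 1 n, s i 0 + L i + 1 ≤ s i 1 ∨ s i 1 + L i + 1 ≤ s i 0)

/-- The completion time `C i` of job `i`: its later unit-time operation's
start time plus one. -/
def completionTime (s : ℕ → Fin 2 → ℕ) (i : ℕ) : ℕ := max (s i 0) (s i 1) + 1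


open Finset

theorem Finset.sum_range_id_mul_two_add (m : ℕ) : (∑ k ∈ range m, k) * 2 + m = m * m := by
  induction m with
  | zero => simp
  | succ m ih => rw [sum_range_succ]; linarith

theorem Finset.sum_range_card_le_sum_id (T : Finset ℕ) : ∑ k ∈ range #T, k ≤ ∑ t ∈ T, t := by
  induction T using Finset.induction_on_max with
  | empty => simp
  | insert a s hlt ih =>
    have has : a ∉ s := fun h => (hlt a h).ne rfl
    have hcard : #s ≤ a := by simpa using card_le_card fun x hx => mem_range.2 (hlt x hx)
    rw [card_insert_of_notMem has, sum_insert has, sum_range_succ]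
    omega

theorem Finset.eq_range_card_of_sum_id_le {T : Finset ℕ} (hT : ∑ t ∈ T, t ≤ ∑ k ∈ range #T, k) :
    T = range #T := by
  induction T using Finset.induction_on_max with
  | empty => simp
  | insert a s hlt ih =>
    have has : a ∉ s := fun h => (hlt a h).ne rfl
    have hcard : #s ≤ a := by simpa using card_le_card fun x hx => mem_range.2 (hlt x hx)
    rw [card_insert_of_notMem has, sum_insert has, sum_range_succ] at hT
    have hs := sum_range_card_le_sum_id s
    obtain rfl : a = #s := by omega
    rw [card_insert_of_notMem has, range_add_one, ← ih (by omega)]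

section InjOn

variable {ι : Type*} {S : Finset ι} {f : ι → ℕ}

theorem Finset.sum_range_card_le_sum_of_injOn (hf : Set.InjOn f S) :
    ∑ k ∈ range #S, k ≤ ∑ i ∈ S, f i := by
  classical
  simpa [card_image_of_injOn hf, sum_image hf] using sum_range_card_le_sum_id (S.image f)

theorem Finset.image_eq_range_of_sum_le [DecidableEq ι] (hf : Set.InjOn f S)
    (hS : ∑ i ∈ S, f i ≤ ∑ k ∈ range #S, k) : S.image f = range #S := by
  rw [← card_image_of_injOn hf]
  exact eq_range_card_of_sum_id_le (by rwa [card_image_of_injOn hf, sum_image hf])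

theorem Finset.le_of_image_eq_range [DecidableEq ι] {T : Finset ι} {h : ℕ}
    (hf : Set.InjOn f S) (hTS : T ⊆ S) (hT : T.image f = range h) {i : ι} (hi : i ∈ S)
    (hiT : i ∉ T) : h ≤ f i := by
  by_contra! hlt
  obtain ⟨j, hj, hji⟩ := mem_image.1 (hT ▸ mem_range.2 hlt : f i ∈ T.image f)
  exact hiT (hf (hTS hj) hi hji ▸ hj)

end InjOn

theorem eq_of_add_eq_two_mul_of_sum_range_add_sum_range_le {a b h : ℕ} (hab : a + b = 2 * h)
    (hsum : ∑ k ∈ range a, k + ∑ k ∈ range b, k ≤ 2 * ∑ k ∈ range h, k) : a = h := by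
  have ha := sum_range_id_mul_two_add a
  have hb := sum_range_id_mul_two_add b
  have hh := sum_range_id_mul_two_add h
  nlinarith

theorem Finset.image_filter_lt_eq_range_of_sum_min_le {ι : Type*} [DecidableEq ι] {J : Finset ι}
    {f g : ι → ℕ} {h : ℕ} (hf : Set.InjOn f J) (hg : Set.InjOn g J) (hJ : #J = 2 * h)
    (hmin : ∑ i ∈ J, min (f i) (g i) ≤ 2 * ∑ k ∈ range h, k) :
    {i ∈ J | f i < g i}.image f = range h ∧ {i ∈ J | ¬ f i < g i}.image g = range h := by
  set A := {i ∈ J | f i < g i}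
  set B := {i ∈ J | ¬ f i < g i}
  have hf' : Set.InjOn f A := hf.mono (filter_subset _ _)
  have hg' : Set.InjOn g B := hg.mono (filter_subset _ _)
  have hsplit : ∑ i ∈ J, min (f i) (g i) = ∑ i ∈ A, f i + ∑ i ∈ B, g i := by
    rw [← sum_filter_add_sum_filter_not J (fun i => f i < g i)]
    congr 1 <;> refine sum_congr rfl fun i hi => ?_ <;> simp only [mem_filter, A, B] at hi
    · exact min_eq_left hi.2.le
    · exact min_eq_right (not_lt.1 hi.2)
  have hA := sum_range_card_le_sum_of_injOn hf'
  have hB := sum_range_card_le_sum_of_injOn hg'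
  have hcard : #A + #B = 2 * h := by rw [card_filter_add_card_filter_not, hJ]
  have hAh : #A = h := eq_of_add_eq_two_mul_of_sum_range_add_sum_range_le hcard (by omega)
  have hBh : #B = h := by omega
  rw [hAh] at hA
  rw [hBh] at hB
  constructor
  · rw [← hAh]; exact image_eq_range_of_sum_le hf' (by rw [hAh]; omega)
  · rw [← hBh]; exact image_eq_range_of_sum_le hg' (by rw [hBh]; omega)

namespace FeasibleSchedule

variable {n : ℕ} {L : ℕ → ℕ} {s : ℕ → Fin 2 → ℕ}

theorem min_add_lag_add_one_le_max (hs : FeasibleSchedule n L s) {i : ℕ} (hi : i ∈ Icc 1 n) :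
    min (s i 0) (s i 1) + L i + 1 ≤ max (s i 0) (s i 1) := by
  rcases hs.2 i hi with h | h <;> omega

theorem sum_range_le_sum (hs : FeasibleSchedule n L s) (m : Fin 2) :
    ∑ k ∈ range n, k ≤ ∑ i ∈ Icc 1 n, s i m := by
  simpa using sum_range_card_le_sum_of_injOn (hs.1 m)

/-- Equality case of the lower bound `2 ∑ C ≥ n (n - 1) + ∑ L + 3 n`. -/
theorem eq_of_sum_completionTime_le (hs : FeasibleSchedule n L s)
    (hC : 2 * ∑ i ∈ Icc 1 n, completionTime s i
      ≤ (∑ k ∈ range n, k) * 2 + ∑ i ∈ Icc 1 n, L i + 3 * n) :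
    (∀ m, (Icc 1 n).image (s · m) = range n) ∧
    (∀ i ∈ Icc 1 n, max (s i 0) (s i 1) = min (s i 0) (s i 1) + L i + 1) ∧
    2 * ∑ i ∈ Icc 1 n, min (s i 0) (s i 1) + ∑ i ∈ Icc 1 n, L i + n
      = (∑ k ∈ range n, k) * 2 := by
  have h0 := hs.sum_range_le_sum 0
  have h1 := hs.sum_range_le_sum 1
  have hgap := sum_le_sum fun i hi => hs.min_add_lag_add_one_le_max hi
  have hgap_sum : ∑ i ∈ Icc 1 n, (min (s i 0) (s i 1) + L i + 1)
      = ∑ i ∈ Icc 1 n, min (s i 0) (s i 1) + ∑ i ∈ Icc 1 n, L i + n := by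
    simp [sum_add_distrib]
  have hC_max : ∑ i ∈ Icc 1 n, completionTime s i = ∑ i ∈ Icc 1 n, max (s i 0) (s i 1) + n := by
    simp [completionTime, sum_add_distrib]
  have hmin_max : ∑ i ∈ Icc 1 n, min (s i 0) (s i 1) + ∑ i ∈ Icc 1 n, max (s i 0) (s i 1)
      = ∑ i ∈ Icc 1 n, s i 0 + ∑ i ∈ Icc 1 n, s i 1 := by
    simp only [← sum_add_distrib, min_add_max]
  have himage (m : Fin 2) (hm : ∑ i ∈ Icc 1 n, s i m ≤ ∑ k ∈ range n, k) :
      (Icc 1 n).image (s · m) = range n := by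
    simpa using image_eq_range_of_sum_le (hs.1 m) (by simpa using hm)
  refine ⟨Fin.forall_fin_two.2 ⟨himage 0 (by omega), himage 1 (by omega)⟩, fun i hi => ?_, by omega⟩
  exact ((sum_eq_sum_iff_of_le fun i hi => hs.min_add_lag_add_one_le_max hi).1 (by omega) i hi).symm

end FeasibleSchedule

/-- One half of a PRN3DM solution: on `A` it is `(πA, σA)`, on `B` it is `(σB, πB)`. -/
def IsHalfMatching (h e : ℕ) (l : ℕ → ℕ) (X : Finset ℕ) (lo hi : ℕ → ℕ) : Prop :=
  Set.BijOn lo X (Icc 1 h) ∧ Set.BijOn hi X (Icc (h + 1) (2 * h)) ∧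
    ∀ i ∈ X, lo i + l i + hi i = e

theorem prn3DMYes_two_mul_iff {h e : ℕ} {l : ℕ → ℕ} :
    PRN3DMYes (2 * h) e l ↔ ∃ (A B : Finset ℕ) (πA σA πB σB : ℕ → ℕ),
      Disjoint A B ∧ A ∪ B = Icc 1 (2 * h) ∧
      IsHalfMatching h e l A πA σA ∧ IsHalfMatching h e l B σB πB := by
  simp only [PRN3DMYes, IsHalfMatching, Nat.mul_div_cancel_left h two_pos]
  constructor
  · rintro ⟨A, B, πA, σA, πB, σB, hAB, hJ, -, -, hπA, hσA, hπB, hσB, heA, heB⟩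
    exact ⟨A, B, πA, σA, πB, σB, hAB, hJ, ⟨hπA, hσA, heA⟩,
      ⟨hσB, hπB, fun i hi => by rw [← heB i hi]; ring⟩⟩
  · rintro ⟨A, B, πA, σA, πB, σB, hAB, hJ, ⟨hπA, hσA, heA⟩, ⟨hσB, hπB, heB⟩⟩
    refine ⟨A, B, πA, σA, πB, σB, hAB, hJ, by simpa using hπA.finsetCard_eq,
      by simpa using hσB.finsetCard_eq, hπA, hσA, hπB, hσB, heA,
      fun i hi => by rw [← heB i hi]; ring⟩

namespace IsHalfMatching

variable {h e : ℕ} {l : ℕ → ℕ} {X : Finset ℕ} {lo hi : ℕ → ℕ}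

theorem lo_mem (hX : IsHalfMatching h e l X lo hi) {i : ℕ} (hiX : i ∈ X) : 1 ≤ lo i ∧ lo i ≤ h :=
  mem_Icc.1 (hX.1.mapsTo hiX)

theorem hi_mem (hX : IsHalfMatching h e l X lo hi) {i : ℕ} (hiX : i ∈ X) :
    h + 1 ≤ hi i ∧ hi i ≤ 2 * h :=
  mem_Icc.1 (hX.2.1.mapsTo hiX)

theorem injOn_lo_sub_one (hX : IsHalfMatching h e l X lo hi) : Set.InjOn (lo · - 1) X :=
  fun i hiX j hjX hij => hX.1.injOn hiX hjX
    (by have := hX.lo_mem hiX; have := hX.lo_mem hjX; simp only at hij; omega)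

theorem injOn_sub_hi (hX : IsHalfMatching h e l X lo hi) : Set.InjOn (3 * h - hi ·) X :=
  fun i hiX j hjX hij => hX.2.1.injOn hiX hjX
    (by have := hX.hi_mem hiX; have := hX.hi_mem hjX; simp only at hij; omega)

theorem two_mul_sum_sub_hi (hX : IsHalfMatching h e l X lo hi) :
    2 * ∑ i ∈ X, (3 * h + 1 - hi i) = h * (3 * h + 1) := by
  have hreindex : ∑ i ∈ X, (3 * h + 1 - hi i) = ∑ k ∈ range h, (h + 1 + k) := by
    rw [sum_nbij hi (fun i hiX => hX.2.1.mapsTo hiX) hX.2.1.injOn hX.2.1.surjOn fun _ _ => rfl]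
    refine sum_nbij' (2 * h - ·) (2 * h - ·) ?_ ?_ ?_ ?_ ?_ <;> intro j hj <;>
      simp only [mem_Icc, mem_range] at hj ⊢ <;>
      omega
  have := sum_range_id_mul_two_add h
  rw [hreindex, sum_add_distrib, sum_const, card_range, smul_eq_mul]
  nlinarith

end IsHalfMatching

section Forward

variable {h e : ℕ} {l : ℕ → ℕ} {A B : Finset ℕ} {πA σA πB σB : ℕ → ℕ}

def matchingSchedule (h : ℕ) (A : Finset ℕ) (πA σA πB σB : ℕ → ℕ) : ℕ → Fin 2 → ℕ :=
  fun i => if i ∈ A then ![πA i - 1, 3 * h - σA i] else ![3 * h - πB i, σB i - 1]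

theorem matchingSchedule_of_mem {i : ℕ} (hi : i ∈ A) :
    matchingSchedule h A πA σA πB σB i 0 = πA i - 1 ∧
      matchingSchedule h A πA σA πB σB i 1 = 3 * h - σA i := by
  simp [matchingSchedule, hi]

theorem matchingSchedule_of_notMem {i : ℕ} (hi : i ∉ A) :
    matchingSchedule h A πA σA πB σB i 0 = 3 * h - πB i ∧
      matchingSchedule h A πA σA πB σB i 1 = σB i - 1 := by
  simp [matchingSchedule, hi]

theorem feasibleSchedule_matchingSchedule (he : e ≤ 3 * h) (hAB : Disjoint A B)
    (hJ : A ∪ B = Icc 1 (2 * h)) (hA : IsHalfMatching h e l A πA σA)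
    (hB : IsHalfMatching h e l B σB πB) :
    FeasibleSchedule (2 * h) (fun i => l i + (3 * h - e)) (matchingSchedule h A πA σA πB σB) := by
  have hBA : ∀ i ∈ B, i ∉ A := fun i hiB hiA => disjoint_left.1 hAB hiA hiB
  refine ⟨Fin.forall_fin_two.2 ⟨?_, ?_⟩, fun i hi => ?_⟩
  · rw [← hJ, coe_union, Set.injOn_union (disjoint_coe.2 hAB)]
    refine ⟨hA.injOn_lo_sub_one.congr fun i hi => (matchingSchedule_of_mem hi).1.symm,
      hB.injOn_sub_hi.congr fun i hi => (matchingSchedule_of_notMem (hBA i hi)).1.symm,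
      fun i hi j hj => ?_⟩
    have := hA.lo_mem hi; have := hB.hi_mem hj
    simp only [(matchingSchedule_of_mem hi).1, (matchingSchedule_of_notMem (hBA j hj)).1]
    omega
  · rw [← hJ, coe_union, Set.injOn_union (disjoint_coe.2 hAB)]
    refine ⟨hA.injOn_sub_hi.congr fun i hi => (matchingSchedule_of_mem hi).2.symm,
      hB.injOn_lo_sub_one.congr fun i hi => (matchingSchedule_of_notMem (hBA i hi)).2.symm,
      fun i hi j hj => ?_⟩
    have := hA.hi_mem hi; have := hB.lo_mem hj
    simp only [(matchingSchedule_of_mem hi).2, (matchingSchedule_of_notMem (hBA j hj)).2]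
    omega
  · rcases mem_union.1 (hJ ▸ hi) with hiA | hiB
    · have := hA.lo_mem hiA; have := hA.hi_mem hiA; have := hA.2.2 i hiA
      rw [(matchingSchedule_of_mem hiA).1, (matchingSchedule_of_mem hiA).2]
      dsimp only
      omega
    · have := hB.lo_mem hiB; have := hB.hi_mem hiB; have := hB.2.2 i hiB
      rw [(matchingSchedule_of_notMem (hBA i hiB)).1, (matchingSchedule_of_notMem (hBA i hiB)).2]
      dsimp only
      omega

theorem sum_completionTime_matchingSchedule (hAB : Disjoint A B)
    (hA : IsHalfMatching h e l A πA σA) (hB : IsHalfMatching h e l B σB πB) :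
    ∑ i ∈ A ∪ B, completionTime (matchingSchedule h A πA σA πB σB) i = h * (3 * h + 1) := by
  have hBA : ∀ i ∈ B, i ∉ A := fun i hiB hiA => disjoint_left.1 hAB hiA hiB
  have hsumA : ∑ i ∈ A, completionTime (matchingSchedule h A πA σA πB σB) i
      = ∑ i ∈ A, (3 * h + 1 - σA i) := sum_congr rfl fun i hi => by
    have := hA.lo_mem hi; have := hA.hi_mem hi
    rw [completionTime, (matchingSchedule_of_mem hi).1, (matchingSchedule_of_mem hi).2]
    omega
  have hsumB : ∑ i ∈ B, completionTime (matchingSchedule h A πA σA πB σB) i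
      = ∑ i ∈ B, (3 * h + 1 - πB i) := sum_congr rfl fun i hi => by
    have := hB.lo_mem hi; have := hB.hi_mem hi
    rw [completionTime, (matchingSchedule_of_notMem (hBA i hi)).1,
      (matchingSchedule_of_notMem (hBA i hi)).2]
    omega
  have := hA.two_mul_sum_sub_hi
  have := hB.two_mul_sum_sub_hi
  rw [sum_union hAB, hsumA, hsumB]
  omega

end Forward

section Backward

variable {h e : ℕ} {l : ℕ → ℕ} {s : ℕ → Fin 2 → ℕ}

theorem FeasibleSchedule.isHalfMatching (he : e ≤ 3 * h)
    (hs : FeasibleSchedule (2 * h) (fun i => l i + (3 * h - e)) s) {p q : Fin 2}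
    (hq : (Icc 1 (2 * h)).image (s · q) = range (2 * h))
    {X Y : Finset ℕ} (hXY : Disjoint X Y) (hJ : X ∪ Y = Icc 1 (2 * h))
    (hX : X.image (s · p) = range h) (hY : Y.image (s · q) = range h)
    (hgap : ∀ i ∈ X, s i q = s i p + (l i + (3 * h - e)) + 1) :
    IsHalfMatching h e l X (s · p + 1) (3 * h - s · q) := by
  have hXJ : X ⊆ Icc 1 (2 * h) := hJ ▸ subset_union_left
  have hinj_p : Set.InjOn (s · p) X := (hs.1 p).mono hXJ
  have hinj_q : Set.InjOn (s · q) X := (hs.1 q).mono hXJ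
  have hcard : #X = h := by rw [← card_range h, ← hX, card_image_of_injOn hinj_p]
  have hp_lt : ∀ i ∈ X, s i p < h := fun i hi => mem_range.1 (hX ▸ mem_image_of_mem _ hi)
  have hq_lt : ∀ i ∈ X, s i q < 2 * h := fun i hi =>
    mem_range.1 (hq ▸ mem_image_of_mem _ (hXJ hi))
  have hq_ge : ∀ i ∈ X, h ≤ s i q := fun i hi =>
    le_of_image_eq_range (hs.1 q) (hJ ▸ subset_union_right) hY (hXJ hi) (disjoint_left.1 hXY hi)
  have hlo_maps : Set.MapsTo (s · p + 1) X (Icc 1 h) := fun i hi => by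
    have := hp_lt i hi; simp only [coe_Icc, Set.mem_Icc]; omega
  have hhi_maps : Set.MapsTo (3 * h - s · q) X (Icc (h + 1) (2 * h)) := fun i hi => by
    have := hq_lt i hi; have := hq_ge i hi; simp only [coe_Icc, Set.mem_Icc]; omega
  have hlo_inj : Set.InjOn (s · p + 1) X := fun i hi j hj hij => hinj_p hi hj (by simpa using hij)
  have hhi_inj : Set.InjOn (3 * h - s · q) X := fun i hi j hj hij => hinj_q hi hj
    (by have := hq_lt i hi; have := hq_lt j hj; simp only at hij ⊢; omega)
  refine ⟨⟨hlo_maps, hlo_inj, surjOn_of_injOn_of_card_le _ hlo_maps hlo_inj (by simp [hcard])⟩,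
    ⟨hhi_maps, hhi_inj, surjOn_of_injOn_of_card_le _ hhi_maps hhi_inj (by simp [hcard]; omega)⟩,
    fun i hi => ?_⟩
  have := hgap i hi; have := hq_lt i hi
  dsimp only
  omega

end Backward

theorem prn3DMYes_of_feasibleSchedule {h e : ℕ} {l : ℕ → ℕ} {s : ℕ → Fin 2 → ℕ} (he : e ≤ 3 * h)
    (hs : FeasibleSchedule (2 * h) (fun i => l i + (3 * h - e)) s)
    (hL : ∑ i ∈ Icc 1 (2 * h), (l i + (3 * h - e)) + 2 * h = 2 * h * h)
    (hC : ∑ i ∈ Icc 1 (2 * h), completionTime s i ≤ h * (3 * h + 1)) :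
    PRN3DMYes (2 * h) e l := by
  have h2h := sum_range_id_mul_two_add (2 * h)
  have hh := sum_range_id_mul_two_add h
  obtain ⟨himage, htight, hmin⟩ := hs.eq_of_sum_completionTime_le (by nlinarith)
  obtain ⟨hA, hB⟩ :=
    image_filter_lt_eq_range_of_sum_min_le (h := h) (hs.1 0) (hs.1 1) (by simp) (by nlinarith)
  have hdisj := disjoint_filter_filter_not (Icc 1 (2 * h)) (Icc 1 (2 * h)) fun i => s i 0 < s i 1
  have hunion := filter_union_filter_not_eq (fun i => s i 0 < s i 1) (Icc 1 (2 * h))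
  rw [prn3DMYes_two_mul_iff]
  refine ⟨_, _, _, _, _, _, hdisj, hunion,
    hs.isHalfMatching he (himage 1) hdisj hunion hA hB fun i hi => ?_,
    hs.isHalfMatching he (himage 0) hdisj.symm ((union_comm _ _).trans hunion) hB hA fun i hi => ?_⟩
  all_goals
    have := htight i (mem_filter.1 hi).1
    have := (mem_filter.1 hi).2
    omega

theorem stmt_6_general (n e : ℕ) (l : ℕ → ℕ) (hne : Even n)
    (h1 : n < e) (h2 : e < 3 * n / 2)
    (hsum : ∑ i ∈ Finset.Icc 1 n, l i = n * (e - n - 1)) :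
    PRN3DMYes n e l ↔
    ∃ s : ℕ → Fin 2 → ℕ,
      FeasibleSchedule n (fun i => l i + (3 * n / 2 - e)) s ∧
      ∑ i ∈ Finset.Icc 1 n, completionTime s i ≤ n / 2 * (3 * n / 2 + 1) := by
  obtain ⟨h, rfl⟩ := hne.two_dvd
  rw [show 3 * (2 * h) / 2 = 3 * h by omega, Nat.mul_div_cancel_left h two_pos]
  constructor
  · rw [prn3DMYes_two_mul_iff]
    rintro ⟨A, B, πA, σA, πB, σB, hAB, hJ, hA, hB⟩
    exact ⟨_, feasibleSchedule_matchingSchedule (by omega) hAB hJ hA hB,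
      (hJ ▸ sum_completionTime_matchingSchedule hAB hA hB).le⟩
  · rintro ⟨s, hs, hC⟩
    refine prn3DMYes_of_feasibleSchedule (by omega) hs ?_ hC
    have hΔ : e - 2 * h - 1 + (3 * h - e) + 1 = h := by omega
    calc ∑ i ∈ Icc 1 (2 * h), (l i + (3 * h - e)) + 2 * h
        = 2 * h * (e - 2 * h - 1 + (3 * h - e) + 1) := by
          simp only [sum_add_distrib, sum_const, Nat.card_Icc, add_tsub_cancel_right, hsum,
            smul_eq_mul]
          ring
      _ = 2 * h * h := by rw [hΔ]

/-- Correctness of the reduction: the PRN3DM instance is a yes-instance iff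
there is a feasible schedule for the two-machine unit-time open shop with time
lags `L i = l i + Δ` whose total completion time is at most
`F = (n/2) * (3n/2 + 1)`. -/
theorem stmt_6 (n e : ℕ) (l : ℕ → ℕ) (hn : 0 < n) (hne : Even n)
    (h1 : n < e) (h2 : e < 3 * n / 2)
    (hsum : ∑ i ∈ Finset.Icc 1 n, l i = n * (e - n - 1)) :
    PRN3DMYes n e l ↔
    ∃ s : ℕ → Fin 2 → ℕ,
      FeasibleSchedule n (fun i => l i + (3 * n / 2 - e)) s ∧
      ∑ i ∈ Finset.Icc 1 n, completionTime s i ≤ n / 2 * (3 * n / 2 + 1) :=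
  stmt_6_general n e l hne h1 h2 hsum
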